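/- arXiv:2302.00137 — 2 statements merged into one kernel-verified Lean document; each statement's English description precedes it below -/
import Mathlib

section
/- With G_δ defined as G_δ(r) = δ(1 + ∫_{-c_0-1}^r exp(-∫_{-c_0-1}^t (|W'(s)|+δ)/(2(W(s)+δ)) ds) dt), W(t) = (1-t^2)^2/2, the differential inequality G_δ'(r)·W'(r) - 2 G_δ''(r)·(W(r) + G_δ(r)) ≥ δ·G_δ'(r) holds for all r ∈ [-c_0-1, c_0+1]. -/
open Set intervalIntegral

/-- The double-well potential `W(t) = (1 - t^2)^2 / 2`. -/
noncomputable def W (t : ℝ) : ℝ := (1 - t ^ 2) ^ 2 / 2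

/-- Its derivative `W'(t) = 2 t (t^2 - 1)`. -/
noncomputable def Wp (t : ℝ) : ℝ := 2 * t * (t ^ 2 - 1)

/-- `G_δ'(r) = δ exp(-∫_{-c₀-1}^r (|W'(s)|+δ)/(2(W(s)+δ)) ds)`. -/
noncomputable def gfun (c₀ δ r : ℝ) : ℝ :=
  δ * Real.exp (-(∫ s in (-c₀ - 1)..r, (|Wp s| + δ) / (2 * (W s + δ))))

/-- `G_δ(r)`. -/
noncomputable def Gfun (c₀ δ r : ℝ) : ℝ :=
  δ * (1 + ∫ t in (-c₀ - 1)..r,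
    Real.exp (-(∫ s in (-c₀ - 1)..t, (|Wp s| + δ) / (2 * (W s + δ)))))

/-- `G_δ''(r) = -G_δ'(r)(|W'(r)|+δ)/(2(W(r)+δ))`. -/
noncomputable def G2fun (c₀ δ r : ℝ) : ℝ :=
  -(gfun c₀ δ r) * (|Wp r| + δ) / (2 * (W r + δ))

/-- The differential inequality `G_δ' W' - 2 G_δ'' (W + G_δ) ≥ δ G_δ'`
on `[-c₀-1, c₀+1]`. -/
theorem stmt10 (c₀ δ : ℝ) (hc₀ : 0 < c₀) (hδ : 0 < δ) (hδ2 : δ ≤ 1 / 2) :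
    ∀ r ∈ Icc (-c₀ - 1) (c₀ + 1),
      gfun c₀ δ r * Wp r - 2 * G2fun c₀ δ r * (W r + Gfun c₀ δ r) ≥ δ * gfun c₀ δ r := by
  intro r hr
  have hD : (0:ℝ) < W r + δ := by
    have : (0:ℝ) ≤ W r := by unfold W; positivity
    linarith
  have hg : 0 < gfun c₀ δ r := by
    unfold gfun; positivity
  have hG : δ ≤ Gfun c₀ δ r := by
    unfold Gfun
    have hI : 0 ≤ ∫ t in (-c₀ - 1)..r,
        Real.exp (-(∫ s in (-c₀ - 1)..t, (|Wp s| + δ) / (2 * (W s + δ)))) := by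
      apply intervalIntegral.integral_nonneg hr.1
      intro u _
      exact (Real.exp_pos _).le
    nlinarith
  have habs : 0 ≤ Wp r + |Wp r| := by
    have := neg_abs_le (Wp r); linarith
  have hA : 0 ≤ |Wp r| := abs_nonneg _
  rw [ge_iff_le, G2fun, ← sub_nonneg]
  have key : gfun c₀ δ r * Wp r -
      2 * (-gfun c₀ δ r * (|Wp r| + δ) / (2 * (W r + δ))) * (W r + Gfun c₀ δ r)
      - δ * gfun c₀ δ r =
      (gfun c₀ δ r * (W r + δ) * (Wp r + |Wp r|)
        + gfun c₀ δ r * (|Wp r| + δ) * (Gfun c₀ δ r - δ)) / (W r + δ) := by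
    field_simp
    ring
  rw [key]
  apply div_nonneg _ hD.le
  have h1 : 0 ≤ gfun c₀ δ r * (W r + δ) * (Wp r + |Wp r|) := by positivity
  have h2 : 0 ≤ gfun c₀ δ r * (|Wp r| + δ) * (Gfun c₀ δ r - δ) := by
    apply mul_nonneg (by positivity); linarith
  linarith
end

section
/- With G_δ as above and c_0 ≥ 1 fixed, there is a constant C > 0 depending only on c_0 such that G_δ'(r) ≥ C δ^3 for all r ∈ [-c_0-1, c_0+1] and all δ ∈ (0, 1/2]. -/
open Set intervalIntegral

/-!
On each of `[-b, -1]`, `[-1, 0]`, `[0, 1]`, `[1, b]` the potential `W` is monotone, so there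
`|W'| / (W + δ) = |(log (W + δ))'|` integrates to a difference of values of `log (W + δ)`.
Since `W (±1) = 0`, the four pieces sum to `2 log (W b + δ) + 2 log (1/2 + δ) - 4 log δ`, and
`δ / (W + δ) ≤ 1` contributes at most `b`. The exponent of `G_δ'` is therefore at least
`-(b + log (W b + 1) - 2 log δ)`, which gives `G_δ' ≥ e^{-b} δ³ / (W b + 1)` with `b = c₀ + 1`.
-/

open Real MeasureTheory

theorem integral_abs_eq_sub_of_hasDerivAt_of_nonneg {f f' : ℝ → ℝ} {u v : ℝ} (huv : u ≤ v)
    (hf : ∀ x ∈ Icc u v, HasDerivAt f (f' x) x) (hf' : IntervalIntegrable f' volume u v)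
    (hsign : ∀ x ∈ Icc u v, 0 ≤ f' x) :
    ∫ x in u..v, |f' x| = f v - f u := by
  rw [← integral_eq_sub_of_hasDerivAt (by rwa [uIcc_of_le huv]) hf']
  refine integral_congr fun x hx => abs_of_nonneg (hsign x ?_)
  rwa [uIcc_of_le huv] at hx

theorem integral_abs_eq_sub_of_hasDerivAt_of_nonpos {f f' : ℝ → ℝ} {u v : ℝ} (huv : u ≤ v)
    (hf : ∀ x ∈ Icc u v, HasDerivAt f (f' x) x) (hf' : IntervalIntegrable f' volume u v)
    (hsign : ∀ x ∈ Icc u v, f' x ≤ 0) :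
    ∫ x in u..v, |f' x| = f u - f v := by
  have := integral_abs_eq_sub_of_hasDerivAt_of_nonneg huv (fun x hx => (hf x hx).neg) hf'.neg
    (fun x hx => neg_nonneg.mpr (hsign x hx))
  simpa only [Pi.neg_apply, abs_neg, neg_sub_neg] using this

theorem W_nonneg (t : ℝ) : 0 ≤ W t := by unfold W; positivity

theorem hasDerivAt_W (t : ℝ) : HasDerivAt W (Wp t) t := by
  have := (((hasDerivAt_pow 2 t).const_sub 1).pow 2).div_const 2
  exact this.congr_deriv (by simp only [Wp]; ring)

theorem W_add_pos {δ : ℝ} (hδ : 0 < δ) (t : ℝ) : 0 < W t + δ := by linarith [W_nonneg t]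

theorem hasDerivAt_log_W_add {δ : ℝ} (hδ : 0 < δ) (t : ℝ) :
    HasDerivAt (fun t => log (W t + δ)) (Wp t / (W t + δ)) t :=
  ((hasDerivAt_W t).add_const δ).log (W_add_pos hδ t).ne'

theorem continuous_Wp_div_W_add {δ : ℝ} (hδ : 0 < δ) : Continuous fun t => Wp t / (W t + δ) :=
  (by unfold Wp; fun_prop : Continuous Wp).div (by unfold W; fun_prop)
    fun t => (W_add_pos hδ t).ne'

theorem integral_abs_Wp_div_W_add {δ b : ℝ} (hδ : 0 < δ) (hb : 1 ≤ b) :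
    ∫ s in -b..b, |Wp s / (W s + δ)| = 2 * log (W b + δ) + 2 * log (1 / 2 + δ) - 4 * log δ := by
  have hderiv : ∀ u v, ∀ x ∈ Icc u v,
      HasDerivAt (fun t => log (W t + δ)) (Wp x / (W x + δ)) x :=
    fun _ _ x _ => hasDerivAt_log_W_add hδ x
  have hint : ∀ u v : ℝ, IntervalIntegrable (fun t => Wp t / (W t + δ)) volume u v :=
    fun u v => (continuous_Wp_div_W_add hδ).intervalIntegrable u v
  have habs : ∀ u v : ℝ, IntervalIntegrable (fun t => |Wp t / (W t + δ)|) volume u v :=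
    fun u v => (continuous_Wp_div_W_add hδ).abs.intervalIntegrable u v
  have hsign : ∀ x, 0 ≤ Wp x → 0 ≤ Wp x / (W x + δ) := fun x h =>
    div_nonneg h (W_add_pos hδ x).le
  have hsign' : ∀ x, Wp x ≤ 0 → Wp x / (W x + δ) ≤ 0 := fun x h =>
    div_nonpos_of_nonpos_of_nonneg h (W_add_pos hδ x).le
  rw [← integral_add_adjacent_intervals (habs _ (-1)) (habs (-1) _),
    ← integral_add_adjacent_intervals (habs (-1) 0) (habs 0 _),
    ← integral_add_adjacent_intervals (habs 0 1) (habs 1 _),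
    integral_abs_eq_sub_of_hasDerivAt_of_nonpos (by linarith) (hderiv _ _) (hint _ _)
      fun x hx => hsign' x (by simp only [Wp]; nlinarith [hx.1, hx.2]),
    integral_abs_eq_sub_of_hasDerivAt_of_nonneg (by norm_num) (hderiv _ _) (hint _ _)
      fun x hx => hsign x (by simp only [Wp]; nlinarith [hx.1, hx.2]),
    integral_abs_eq_sub_of_hasDerivAt_of_nonpos (by norm_num) (hderiv _ _) (hint _ _)
      fun x hx => hsign' x (by simp only [Wp]; nlinarith [hx.1, hx.2]),
    integral_abs_eq_sub_of_hasDerivAt_of_nonneg hb (hderiv _ _) (hint _ _)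
      fun x hx => hsign x (by simp only [Wp]; nlinarith [hx.1, hx.2])]
  norm_num [W]
  ring

theorem gfun_integrand_le {δ : ℝ} (hδ : 0 < δ) (s : ℝ) :
    (|Wp s| + δ) / (2 * (W s + δ)) ≤ |Wp s / (W s + δ)| / 2 + 1 / 2 := by
  have hpos := W_add_pos hδ s
  have hδW : δ / (W s + δ) ≤ 1 := div_le_one_of_le₀ (by linarith [W_nonneg s]) hpos.le
  calc (|Wp s| + δ) / (2 * (W s + δ)) = |Wp s| / (W s + δ) / 2 + δ / (W s + δ) / 2 := by
        field_simp
    _ ≤ |Wp s / (W s + δ)| / 2 + 1 / 2 := by rw [abs_div, abs_of_pos hpos]; linarith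

theorem integral_gfun_integrand_le {δ b r : ℝ} (hδ : 0 < δ) (hδ₁ : δ ≤ 1 / 2) (hb : 1 ≤ b)
    (hr : r ∈ Icc (-b) b) :
    ∫ s in -b..r, (|Wp s| + δ) / (2 * (W s + δ)) ≤ b + log ((W b + 1) / δ ^ 2) := by
  have hcont : Continuous fun s => (|Wp s| + δ) / (2 * (W s + δ)) :=
    ((by unfold Wp; fun_prop : Continuous Wp).abs.add continuous_const).div
      (by unfold W; fun_prop) fun s => by linarith [W_add_pos hδ s]
  have hbound : Continuous fun s => |Wp s / (W s + δ)| / 2 + 1 / 2 :=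
    ((continuous_Wp_div_W_add hδ).abs.div_const 2).add continuous_const
  calc ∫ s in -b..r, (|Wp s| + δ) / (2 * (W s + δ))
      ≤ ∫ s in -b..b, (|Wp s| + δ) / (2 * (W s + δ)) :=
        integral_mono_interval le_rfl hr.1 hr.2
          (Filter.Eventually.of_forall fun s => by have := W_add_pos hδ s; positivity)
          (hcont.intervalIntegrable _ _)
    _ ≤ ∫ s in -b..b, (|Wp s / (W s + δ)| / 2 + 1 / 2) :=
        integral_mono_on (by linarith) (hcont.intervalIntegrable _ _)
          (hbound.intervalIntegrable _ _) fun s _ => gfun_integrand_le hδ s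
    _ = log (W b + δ) + log (1 / 2 + δ) - 2 * log δ + b := by
        rw [integral_add (((continuous_Wp_div_W_add hδ).abs.div_const 2).intervalIntegrable _ _)
          intervalIntegrable_const, intervalIntegral.integral_div,
          integral_abs_Wp_div_W_add hδ hb, intervalIntegral.integral_const, smul_eq_mul]
        ring
    _ ≤ b + log ((W b + 1) / δ ^ 2) := by
        have h₁ : log (W b + δ) ≤ log (W b + 1) :=
          log_le_log (W_add_pos hδ b) (by linarith)
        have h₂ : log (1 / 2 + δ) ≤ 0 := log_nonpos (by linarith) (by linarith)
        rw [log_div (by linarith [W_nonneg b]) (by positivity), log_pow]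
        push_cast
        linarith

/-- For fixed `c₀ ≥ 1` there is `C > 0` depending only on `c₀` with
`G_δ'(r) ≥ C δ³` for all `r ∈ [-c₀-1, c₀+1]` and all `δ ∈ (0, 1/2]`. -/
theorem stmt11 (c₀ : ℝ) (hc₀ : 1 ≤ c₀) :
    ∃ C : ℝ, 0 < C ∧ ∀ δ : ℝ, 0 < δ → δ ≤ 1 / 2 →
      ∀ r ∈ Icc (-c₀ - 1) (c₀ + 1), gfun c₀ δ r ≥ C * δ ^ 3 := by
  have hW : 0 < W (c₀ + 1) + 1 := by linarith [W_nonneg (c₀ + 1)]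
  refine ⟨exp (-(c₀ + 1)) / (W (c₀ + 1) + 1), by positivity, fun δ hδ hδ₁ r hr => ?_⟩
  rw [← neg_add'] at hr
  have hI := integral_gfun_integrand_le hδ hδ₁ (by linarith) hr
  calc exp (-(c₀ + 1)) / (W (c₀ + 1) + 1) * δ ^ 3
      = δ * exp (-(c₀ + 1 + log ((W (c₀ + 1) + 1) / δ ^ 2))) := by
        rw [neg_add (c₀ + 1), exp_add, exp_neg (log _), exp_log (by positivity)]
        field_simp
    _ ≤ gfun c₀ δ r := by
        rw [gfun, ← neg_add']
        gcongr
end
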